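/- arXiv:2501.05737 — 4 statements merged into one kernel-verified Lean document; each statement's English description precedes it below -/
import Mathlib

section
/- Agreement error of VRA-DGT (Lemma 3.3): under the stated assumptions, for every k ≥ 1 the VRA-DGT iterates satisfy E‖x_{k+1} − 𝐱̄_{k+1}‖² ≤ (1 − γ_kη_w + 16L²α_k²/(γ_kη_w))·E‖x_k − 𝐱̄_k‖² + (4α_k²/(γ_kη_w))·E‖y_k − 𝐲̄_k‖² + (16·n·L²·α_k²/(γ_kη_w))·E‖x̄_k − x*‖² + (8γ²α_k²/(γ_kη_w))·E‖e^s_k‖² + (2γ_k/η_w)·E‖e^x_k‖². -/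
open MeasureTheory Finset
open scoped RealInnerProductSpace

noncomputable section

variable {n d : ℕ}

/-- Row average `Ā = (1/n) ∑ᵢ aᵢ` of an `n × d` matrix given by its rows. -/
def rowAvg (A : Fin n → EuclideanSpace ℝ (Fin d)) : EuclideanSpace ℝ (Fin d) :=
  (n : ℝ)⁻¹ • ∑ i, A i

/-- Squared Frobenius norm `‖A‖²` of a matrix given by its rows. -/
def fro2 (A : Fin n → EuclideanSpace ℝ (Fin d)) : ℝ := ∑ i, ‖A i‖ ^ 2

/-- Squared Frobenius norm `‖A − 𝟏·Āᵀ‖²` of the deviation from consensus. -/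
def dev2 (A : Fin n → EuclideanSpace ℝ (Fin d)) : ℝ := ∑ i, ‖A i - rowAvg A‖ ^ 2

/-- Squared Frobenius norm of an `n × n` weight matrix. -/
def mFro2 (M : Matrix (Fin n) (Fin n) ℝ) : ℝ := ∑ i, ∑ j, (M i j) ^ 2

/-- The mixed weight matrix `W_c = (1−c)·I + c·W`. -/
def mixW (W : Matrix (Fin n) (Fin n) ℝ) (c : ℝ) : Matrix (Fin n) (Fin n) ℝ :=
  (1 - c) • (1 : Matrix (Fin n) (Fin n) ℝ) + c • W

/-- Multiplication of an `n × d` matrix (given by rows) by an `n × n` matrix. -/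
def wmul (M : Matrix (Fin n) (Fin n) ℝ) (A : Fin n → EuclideanSpace ℝ (Fin d)) :
    Fin n → EuclideanSpace ℝ (Fin d) := fun i => ∑ j, M i j • A j

/-- `W` with its diagonal set to zero. -/
def offdiag (W : Matrix (Fin n) (Fin n) ℝ) : Matrix (Fin n) (Fin n) ℝ :=
  Matrix.of fun i j => if i = j then (0 : ℝ) else W i j

/-- The global objective `f = (1/n) ∑ᵢ fᵢ`. -/
def fglob (f : Fin n → EuclideanSpace ℝ (Fin d) → ℝ) :
    EuclideanSpace ℝ (Fin d) → ℝ := fun z => (n : ℝ)⁻¹ * ∑ i, f i z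

/-- The matrix of local gradients `g_k`, whose `i`-th row is `∇fᵢ(x_{i,k})`. -/
def gmat (f : Fin n → EuclideanSpace ℝ (Fin d) → ℝ)
    (A : Fin n → EuclideanSpace ℝ (Fin d)) : Fin n → EuclideanSpace ℝ (Fin d) :=
  fun i => gradient (f i) (A i)


theorem key_ineq {E : Type*} [SeminormedAddCommGroup E] (a b c : E) (s D : ℝ)
    (hs : 0 < s) (hs1 : s ≤ 1) (hD : 0 ≤ D) (ha : ‖a‖ ^ 2 ≤ (1 - s) ^ 2 * D) :
    ‖a + b + c‖ ^ 2 ≤ (1 - s) * D + 2 / s * (‖b‖ ^ 2 + ‖c‖ ^ 2) := by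
  set t := Real.sqrt D with ht
  have ht2 : t ^ 2 = D := Real.sq_sqrt hD
  have htn : 0 ≤ t := Real.sqrt_nonneg D
  have h1s : 0 ≤ 1 - s := by linarith
  have ha' : ‖a‖ ≤ (1 - s) * t := by
    have h1 : (0:ℝ) ≤ (1 - s) * t := mul_nonneg h1s htn
    nlinarith [norm_nonneg a]
  have htri : ‖a + b + c‖ ≤ ‖a‖ + ‖b‖ + ‖c‖ :=
    (norm_add_le _ _).trans (by gcongr; exact norm_add_le _ _)
  have hN : 0 ≤ ‖a + b + c‖ := norm_nonneg _
  have hb := norm_nonneg b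
  have hc := norm_nonneg c
  have hna := norm_nonneg a
  have h2 : (‖a‖ + ‖b‖ + ‖c‖) ^ 2 ≤ ((1 - s) * t + ‖b‖ + ‖c‖) ^ 2 := by
    have := mul_self_le_mul_self (by positivity : (0:ℝ) ≤ ‖a‖ + ‖b‖ + ‖c‖)
      (by linarith : ‖a‖ + ‖b‖ + ‖c‖ ≤ (1 - s) * t + ‖b‖ + ‖c‖)
    nlinarith [this]
  have hmain : s * (‖a‖ + ‖b‖ + ‖c‖) ^ 2 ≤ s * ((1 - s) * D) + 2 * (‖b‖ ^ 2 + ‖c‖ ^ 2) := by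
    have h3 := mul_le_mul_of_nonneg_left h2 hs.le
    nlinarith [mul_nonneg h1s (sq_nonneg (s * t - (‖b‖ + ‖c‖))), sq_nonneg (‖b‖ - ‖c‖)]
  have hfin : ‖a + b + c‖ ^ 2 ≤ (‖a‖ + ‖b‖ + ‖c‖) ^ 2 := by nlinarith
  refine hfin.trans ?_
  apply le_of_mul_le_mul_left _ hs
  have : s * (2 / s * (‖b‖ ^ 2 + ‖c‖ ^ 2)) = 2 * (‖b‖ ^ 2 + ‖c‖ ^ 2) := by
    field_simp
  nlinarith [hmain]

noncomputable section
variable {n d : ℕ}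

theorem sum_eq_smul_rowAvg (hn : 0 < n) (A : Fin n → EuclideanSpace ℝ (Fin d)) :
    ∑ i, A i = (n : ℝ) • rowAvg A := by
  rw [rowAvg, smul_smul, mul_inv_cancel₀ (by exact_mod_cast hn.ne'), one_smul]

theorem sum_dev (hn : 0 < n) (A : Fin n → EuclideanSpace ℝ (Fin d)) :
    ∑ i, (A i - rowAvg A) = 0 := by
  rw [Finset.sum_sub_distrib, sum_eq_smul_rowAvg hn A, Finset.sum_const, card_univ,
    Fintype.card_fin, sub_eq_zero, ← Nat.cast_smul_eq_nsmul ℝ]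

theorem dev2_nonneg (A : Fin n → EuclideanSpace ℝ (Fin d)) : 0 ≤ dev2 A :=
  Finset.sum_nonneg fun i _ => sq_nonneg _

theorem fro2_nonneg (A : Fin n → EuclideanSpace ℝ (Fin d)) : 0 ≤ fro2 A :=
  Finset.sum_nonneg fun i _ => sq_nonneg _

theorem dev2_le_fro2 (hn : 0 < n) (A : Fin n → EuclideanSpace ℝ (Fin d)) :
    dev2 A ≤ fro2 A := by
  have h : dev2 A = fro2 A - (n : ℝ) * ‖rowAvg A‖ ^ 2 := by
    unfold dev2 fro2
    have : ∀ i, ‖A i - rowAvg A‖ ^ 2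
        = ‖A i‖ ^ 2 - 2 * ⟪A i, rowAvg A⟫ + ‖rowAvg A‖ ^ 2 := fun i =>
      norm_sub_sq_real _ _
    rw [Finset.sum_congr rfl fun i _ => this i, Finset.sum_add_distrib,
      Finset.sum_sub_distrib, ← Finset.mul_sum,
      ← sum_inner, sum_eq_smul_rowAvg hn A, real_inner_smul_left]
    simp only [Finset.sum_const, card_univ, Fintype.card_fin, nsmul_eq_mul,
      real_inner_self_eq_norm_sq]
    ring
  rw [h]
  nlinarith [sq_nonneg ‖rowAvg A‖, Nat.cast_nonneg (α := ℝ) n]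

-- deviation of scaled difference
theorem dev2_smul_sub (r : ℝ) (A : Fin n → EuclideanSpace ℝ (Fin d)) :
    ∑ i, ‖r • (A i - rowAvg A)‖ ^ 2 = r ^ 2 * dev2 A := by
  unfold dev2
  rw [Finset.mul_sum]
  refine Finset.sum_congr rfl fun i _ => ?_
  rw [norm_smul, mul_pow, Real.norm_eq_abs, sq_abs]

theorem norm_sq_euc (v : EuclideanSpace ℝ (Fin d)) : ‖v‖ ^ 2 = ∑ t, (v t) ^ 2 := by
  rw [PiLp.norm_sq_eq_of_L2]
  exact Finset.sum_congr rfl fun t _ => by rw [Real.norm_eq_abs, sq_abs]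

theorem spec_vec (M : Matrix (Fin n) (Fin n) ℝ) (κ : ℝ)
    (hs : ∀ v : Fin n → ℝ, ∑ i, (∑ j, (M i j - (n : ℝ)⁻¹) * v j) ^ 2 ≤ κ * ∑ i, (v i) ^ 2)
    (v : Fin n → EuclideanSpace ℝ (Fin d)) :
    ∑ i, ‖∑ j, (M i j - (n : ℝ)⁻¹) • v j‖ ^ 2 ≤ κ * ∑ j, ‖v j‖ ^ 2 := by
  have happ : ∀ i t, (∑ j, (M i j - (n : ℝ)⁻¹) • v j) t
      = ∑ j, (M i j - (n : ℝ)⁻¹) * v j t := by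
    intro i t
    induction (Finset.univ : Finset (Fin n)) using Finset.induction_on with
    | empty => simp
    | insert _ _ hnot ih =>
        rw [Finset.sum_insert hnot, Finset.sum_insert hnot, PiLp.add_apply,
          PiLp.smul_apply, smul_eq_mul, ih]
  calc ∑ i, ‖∑ j, (M i j - (n : ℝ)⁻¹) • v j‖ ^ 2
      = ∑ t, ∑ i, (∑ j, (M i j - (n : ℝ)⁻¹) * v j t) ^ 2 := by
        rw [Finset.sum_comm]
        exact Finset.sum_congr rfl fun i _ => by
          rw [norm_sq_euc]
          exact Finset.sum_congr rfl fun t _ => by rw [happ]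
    _ ≤ ∑ t, κ * ∑ j, (v j t) ^ 2 := Finset.sum_le_sum fun t _ => hs fun j => v j t
    _ = κ * ∑ j, ‖v j‖ ^ 2 := by
        rw [← Finset.mul_sum, Finset.sum_comm]
        congr 1
        exact Finset.sum_congr rfl fun j _ => (norm_sq_euc _).symm

theorem mixW_row (W : Matrix (Fin n) (Fin n) ℝ) (hWrow : ∀ i, ∑ j, W i j = 1)
    (c : ℝ) (i : Fin n) : ∑ j, mixW W c i j = 1 := by
  simp only [mixW, Matrix.add_apply, Matrix.smul_apply, Matrix.one_apply, smul_eq_mul,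
    Finset.sum_add_distrib, ← Finset.mul_sum, hWrow]
  simp [Finset.sum_ite_eq, mul_ite]

theorem mixW_col (W : Matrix (Fin n) (Fin n) ℝ) (hWcol : ∀ j, ∑ i, W i j = 1)
    (c : ℝ) (j : Fin n) : ∑ i, mixW W c i j = 1 := by
  simp only [mixW, Matrix.add_apply, Matrix.smul_apply, Matrix.one_apply, smul_eq_mul,
    Finset.sum_add_distrib, ← Finset.mul_sum, hWcol]
  simp [Finset.sum_ite_eq', mul_ite]

set_option maxHeartbeats 1000000 in
theorem pointwise_bound (hn : 0 < n)
    (W : Matrix (Fin n) (Fin n) ℝ)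
    (hWrow : ∀ i, ∑ j, W i j = 1) (hWcol : ∀ j, ∑ i, W i j = 1)
    (ηw c a : ℝ) (hη : 0 < ηw) (hη1 : ηw ≤ 1) (hc : 0 < c) (hc1 : c ≤ 1)
    (hspec : ∀ v : Fin n → ℝ, ∑ i, (∑ j, (mixW W c i j - (n : ℝ)⁻¹) * v j) ^ 2
      ≤ (1 - c * ηw) ^ 2 * ∑ i, (v i) ^ 2)
    (X Y E X' : Fin n → EuclideanSpace ℝ (Fin d))
    (hrec : ∀ i, X' i = wmul (mixW W c) X i + c • E i - a • Y i) :
    dev2 X' ≤ (1 - c * ηw) * dev2 X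
      + 2 / (c * ηw) * (c ^ 2 * fro2 E + a ^ 2 * dev2 Y) := by
  set M := mixW W c with hM
  -- average of X'
  have havg : rowAvg X' = rowAvg X + c • rowAvg E - a • rowAvg Y := by
    unfold rowAvg
    rw [show (∑ i, X' i) = ∑ i, (wmul M X i + c • E i - a • Y i) from
      Finset.sum_congr rfl fun i _ => hrec i]
    rw [Finset.sum_sub_distrib, Finset.sum_add_distrib, ← Finset.smul_sum, ← Finset.smul_sum]
    have hw : ∑ i, wmul M X i = ∑ j, X j := by
      unfold wmul
      rw [Finset.sum_comm]
      refine Finset.sum_congr rfl fun j _ => ?_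
      rw [← Finset.sum_smul, mixW_col W hWcol c j, one_smul]
    rw [hw, smul_sub, smul_add, smul_comm ((n:ℝ)⁻¹) c, smul_comm ((n:ℝ)⁻¹) a]
  -- the three pieces
  set A1 : Fin n → EuclideanSpace ℝ (Fin d) :=
    fun i => ∑ j, (M i j - (n : ℝ)⁻¹) • (X j - rowAvg X) with hA1
  set B1 : Fin n → EuclideanSpace ℝ (Fin d) := fun i => c • (E i - rowAvg E) with hB1
  set C1 : Fin n → EuclideanSpace ℝ (Fin d) := fun i => -(a • (Y i - rowAvg Y)) with hC1
  have hdecomp : ∀ i, X' i - rowAvg X' = A1 i + B1 i + C1 i := by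
    intro i
    rw [hrec i, havg]
    have hz : ∑ j, (n:ℝ)⁻¹ • (X j - rowAvg X) = 0 := by
      rw [← Finset.smul_sum, sum_dev hn X, smul_zero]
    have h1 : A1 i = wmul M X i - rowAvg X := by
      show (∑ j, (M i j - (n : ℝ)⁻¹) • (X j - rowAvg X)) = _
      calc (∑ j, (M i j - (n : ℝ)⁻¹) • (X j - rowAvg X))
          = ∑ j, M i j • (X j - rowAvg X) - ∑ j, (n:ℝ)⁻¹ • (X j - rowAvg X) := by
            simp only [sub_smul, Finset.sum_sub_distrib]
        _ = ∑ j, M i j • (X j - rowAvg X) := by rw [hz, sub_zero]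
        _ = wmul M X i - rowAvg X := by
            simp only [smul_sub, Finset.sum_sub_distrib, ← Finset.sum_smul,
              mixW_row W hWrow c i, one_smul]
            rw [show (∑ j, M i j) = 1 from mixW_row W hWrow c i, one_smul]
            rfl
    rw [h1, hB1, hC1]
    simp only [smul_sub]
    abel
  -- norms of pieces
  have hA1n : ∑ i, ‖A1 i‖ ^ 2 ≤ (1 - c * ηw) ^ 2 * dev2 X := by
    unfold dev2
    exact spec_vec M _ hspec _
  have hB1n : ∑ i, ‖B1 i‖ ^ 2 ≤ c ^ 2 * fro2 E := by
    rw [hB1, dev2_smul_sub c E]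
    exact mul_le_mul_of_nonneg_left (dev2_le_fro2 hn E) (sq_nonneg c)
  have hC1n : ∑ i, ‖C1 i‖ ^ 2 = a ^ 2 * dev2 Y := by
    rw [hC1]
    simp only [norm_neg]
    exact dev2_smul_sub a Y
  -- lift to PiLp
  set P := PiLp 2 (fun _ : Fin n => EuclideanSpace ℝ (Fin d)) with hP
  set pA : P := WithLp.toLp 2 A1 with hpA
  set pB : P := WithLp.toLp 2 B1 with hpB
  set pC : P := WithLp.toLp 2 C1 with hpC
  have hsum : dev2 X' = ‖pA + pB + pC‖ ^ 2 := by
    rw [PiLp.norm_sq_eq_of_L2]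
    unfold dev2
    refine Finset.sum_congr rfl fun i _ => ?_
    rw [hdecomp i]
    congr 1
  have hs : 0 < c * ηw := mul_pos hc hη
  have hs1 : c * ηw ≤ 1 := by nlinarith
  have hApow : ‖pA‖ ^ 2 ≤ (1 - c * ηw) ^ 2 * dev2 X := by
    rw [PiLp.norm_sq_eq_of_L2]; exact hA1n
  have hkey := key_ineq pA pB pC (c * ηw) (dev2 X) hs hs1 (dev2_nonneg X) hApow
  have hBpow : ‖pB‖ ^ 2 ≤ c ^ 2 * fro2 E := by rw [PiLp.norm_sq_eq_of_L2]; exact hB1n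
  have hCpow : ‖pC‖ ^ 2 = a ^ 2 * dev2 Y := by rw [PiLp.norm_sq_eq_of_L2]; exact hC1n
  rw [hsum]
  refine hkey.trans ?_
  have h2s : 0 ≤ 2 / (c * ηw) := by positivity
  exact add_le_add_right
    (mul_le_mul_of_nonneg_left (add_le_add hBpow hCpow.le) h2s) _

/-- **Lemma 3.3 (agreement error of VRA-DGT).** -/
theorem vra_dgt_agreement_error
    {Ω : Type*} {m0 : MeasurableSpace Ω} (μ : Measure Ω) [IsProbabilityMeasure μ]
    (hn : 0 < n) (hd : 0 < d)
    (f : Fin n → EuclideanSpace ℝ (Fin d) → ℝ)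
    (L μs ηw : ℝ) (xstar : EuclideanSpace ℝ (Fin d))
    (W : Matrix (Fin n) (Fin n) ℝ)
    (α γk : ℕ → ℝ) (γ : ℝ)
    (x y ex es : ℕ → Ω → Fin n → EuclideanSpace ℝ (Fin d))
    -- Assumption 3.1: the local functions are L-smooth and f is μ-strongly convex
    (hdiff : ∀ i, Differentiable ℝ (f i))
    (hLip : ∀ i a b, ‖gradient (f i) a - gradient (f i) b‖ ≤ L * ‖a - b‖)
    (hμ : 0 < μs)
    (hsc : ∀ a b, fglob f b ≥
      fglob f a + ⟪gradient (fglob f) a, b - a⟫ + μs / 2 * ‖a - b‖ ^ 2)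
    (hopt : gradient (fglob f) xstar = 0)
    -- Assumption 3.2: W is nonnegative doubly stochastic, with spectral gap ηw
    (hWnn : ∀ i j, 0 ≤ W i j)
    (hWrow : ∀ i, ∑ j, W i j = 1) (hWcol : ∀ j, ∑ i, W i j = 1)
    (hηw : ηw ∈ Set.Ioc (0 : ℝ) 1)
    (hspec : ∀ c ∈ Set.Icc (0 : ℝ) 1, ∀ v : Fin n → ℝ,
      ∑ i, (∑ j, (mixW W c i j - (n : ℝ)⁻¹) * v j) ^ 2
        ≤ (1 - c * ηw) ^ 2 * ∑ i, (v i) ^ 2)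
    -- algorithm parameters
    (hα : ∀ k, 0 < α k) (hγk : ∀ k, γk k ∈ Set.Ioc (0 : ℝ) 1)
    (hγ : γ ∈ Set.Ioc (0 : ℝ) 1)
    -- VRA-DGT recursions
    (hxrec : ∀ k, 1 ≤ k → ∀ ω i, x (k + 1) ω i
      = wmul (mixW W (γk k)) (x k ω) i + γk k • ex k ω i - α k • y k ω i)
    (hyrec : ∀ k, 1 ≤ k → ∀ ω i, y (k + 1) ω i
      = wmul (mixW W γ) (y k ω) i
        + (gmat f (x (k + 1) ω) i + γ • es (k + 1) ω i)
        - (gmat f (x k ω) i + γ • es k ω i))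
    (hy1 : ∀ ω, rowAvg (y 1 ω) = rowAvg (gmat f (x 1 ω)) + γ • rowAvg (es 1 ω))
    -- integrability of all second moments involved
    (hIy : ∀ k, Integrable (fun ω => dev2 (y k ω)) μ)
    (hIx : ∀ k, Integrable (fun ω => dev2 (x k ω)) μ)
    (hIopt : ∀ k, Integrable (fun ω => ‖rowAvg (x k ω) - xstar‖ ^ 2) μ)
    (hIex : ∀ k, Integrable (fun ω => fro2 (ex k ω)) μ)
    (hIes : ∀ k, Integrable (fun ω => fro2 (es k ω)) μ) :
    ∀ k, 1 ≤ k →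
      ∫ ω, dev2 (x (k + 1) ω) ∂μ
        ≤ (1 - γk k * ηw + 16 * L ^ 2 * α k ^ 2 / (γk k * ηw)) * ∫ ω, dev2 (x k ω) ∂μ
          + 4 * α k ^ 2 / (γk k * ηw) * ∫ ω, dev2 (y k ω) ∂μ
          + 16 * n * L ^ 2 * α k ^ 2 / (γk k * ηw) *
              ∫ ω, ‖rowAvg (x k ω) - xstar‖ ^ 2 ∂μ
          + 8 * γ ^ 2 * α k ^ 2 / (γk k * ηw) * ∫ ω, fro2 (es k ω) ∂μ
          + 2 * γk k / ηw * ∫ ω, fro2 (ex k ω) ∂μ := by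

  intro k hk
  have hγk1 := (hγk k).1
  have hγk2 := (hγk k).2
  have hη1 := hηw.1
  have hη2 := hηw.2
  have hs : 0 < γk k * ηw := mul_pos hγk1 hη1
  have hpt : ∀ ω, dev2 (x (k + 1) ω)
      ≤ (1 - γk k * ηw) * dev2 (x k ω)
        + (2 / (γk k * ηw) * γk k ^ 2) * fro2 (ex k ω)
        + (2 / (γk k * ηw) * α k ^ 2) * dev2 (y k ω) := by
    intro ω
    refine (pointwise_bound hn W hWrow hWcol ηw (γk k) (α k) hη1 hη2 hγk1 hγk2
      (fun v => hspec (γk k) ⟨hγk1.le, hγk2⟩ v)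
      (x k ω) (y k ω) (ex k ω) (x (k + 1) ω) (fun i => hxrec k hk ω i)).trans_eq ?_
    ring
  have hRHSint : Integrable (fun ω =>
      (1 - γk k * ηw) * dev2 (x k ω)
        + (2 / (γk k * ηw) * γk k ^ 2) * fro2 (ex k ω)
        + (2 / (γk k * ηw) * α k ^ 2) * dev2 (y k ω)) μ :=
    (((hIx k).const_mul _).add ((hIex k).const_mul _)).add ((hIy k).const_mul _)
  have hint : ∫ ω, dev2 (x (k + 1) ω) ∂μ
      ≤ (1 - γk k * ηw) * ∫ ω, dev2 (x k ω) ∂μ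
        + (2 / (γk k * ηw) * γk k ^ 2) * ∫ ω, fro2 (ex k ω) ∂μ
        + (2 / (γk k * ηw) * α k ^ 2) * ∫ ω, dev2 (y k ω) ∂μ := by
    refine (integral_mono (hIx (k + 1)) hRHSint hpt).trans_eq ?_
    have hIa : Integrable (fun ω => (1 - γk k * ηw) * dev2 (x k ω)
        + 2 / (γk k * ηw) * γk k ^ 2 * fro2 (ex k ω)) μ :=
      ((hIx k).const_mul _).add ((hIex k).const_mul _)
    rw [integral_add hIa ((hIy k).const_mul _),
      integral_add ((hIx k).const_mul _) ((hIex k).const_mul _),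
      integral_const_mul, integral_const_mul, integral_const_mul]
  refine hint.trans ?_
  have hI1 : 0 ≤ ∫ ω, dev2 (x k ω) ∂μ :=
    integral_nonneg fun ω => dev2_nonneg _
  have hI2 : 0 ≤ ∫ ω, dev2 (y k ω) ∂μ :=
    integral_nonneg fun ω => dev2_nonneg _
  have hI3 : 0 ≤ ∫ ω, fro2 (ex k ω) ∂μ :=
    integral_nonneg fun ω => fro2_nonneg _
  have hIo : 0 ≤ ∫ ω, ‖rowAvg (x k ω) - xstar‖ ^ 2 ∂μ :=
    integral_nonneg fun ω => sq_nonneg _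
  have hIe : 0 ≤ ∫ ω, fro2 (es k ω) ∂μ :=
    integral_nonneg fun ω => fro2_nonneg _
  have hcoef3 : 2 / (γk k * ηw) * γk k ^ 2 = 2 * γk k / ηw := by
    field_simp
  have t1 : 0 ≤ 16 * L ^ 2 * α k ^ 2 / (γk k * ηw) * ∫ ω, dev2 (x k ω) ∂μ := by
    have : (0:ℝ) ≤ 16 * L ^ 2 * α k ^ 2 / (γk k * ηw) := by positivity
    exact mul_nonneg this hI1
  have t2 : 0 ≤ 2 * α k ^ 2 / (γk k * ηw) * ∫ ω, dev2 (y k ω) ∂μ := by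
    have : (0:ℝ) ≤ 2 * α k ^ 2 / (γk k * ηw) := by positivity
    exact mul_nonneg this hI2
  have t3 : 0 ≤ 16 * n * L ^ 2 * α k ^ 2 / (γk k * ηw) *
      ∫ ω, ‖rowAvg (x k ω) - xstar‖ ^ 2 ∂μ := by
    have : (0:ℝ) ≤ 16 * n * L ^ 2 * α k ^ 2 / (γk k * ηw) := by positivity
    exact mul_nonneg this hIo
  have t4 : 0 ≤ 8 * γ ^ 2 * α k ^ 2 / (γk k * ηw) * ∫ ω, fro2 (es k ω) ∂μ := by
    have : (0:ℝ) ≤ 8 * γ ^ 2 * α k ^ 2 / (γk k * ηw) := by positivity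
    exact mul_nonneg this hIe
  rw [hcoef3]
  have hcoef2 : 2 / (γk k * ηw) * α k ^ 2 = 2 * α k ^ 2 / (γk k * ηw) := by ring
  rw [hcoef2]
  have hsplit : (1 - γk k * ηw + 16 * L ^ 2 * α k ^ 2 / (γk k * ηw)) * ∫ ω, dev2 (x k ω) ∂μ
      = (1 - γk k * ηw) * (∫ ω, dev2 (x k ω) ∂μ)
        + 16 * L ^ 2 * α k ^ 2 / (γk k * ηw) * ∫ ω, dev2 (x k ω) ∂μ := by ring
  have hsplit2 : 4 * α k ^ 2 / (γk k * ηw) * ∫ ω, dev2 (y k ω) ∂μ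
      = 2 * α k ^ 2 / (γk k * ηw) * (∫ ω, dev2 (y k ω) ∂μ)
        + 2 * α k ^ 2 / (γk k * ηw) * ∫ ω, dev2 (y k ω) ∂μ := by ring
  rw [hsplit, hsplit2]
  linarith


end
end
end

section
/- Bound on the averaged tracking direction (inequality (ybar-bound), pointwise form): suppose ȳ_k = (1/n)∑_{j=1}^n ∇f_j(x_{j,k}) + γ·ē^s_k, each f_j is differentiable with L-Lipschitz gradient, f := (1/n)∑_j f_j, and ∇f(x*) = 0. Then ‖ȳ_k − ∇f(x*)‖² = ‖ȳ_k‖² ≤ (4L²/n)·‖x_k − 𝐱̄_k‖² + 4L²·‖x̄_k − x*‖² + (2γ²/n)·‖e^s_k‖². -/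
open MeasureTheory Finset
open scoped RealInnerProductSpace

noncomputable section

variable {n d : ℕ}

lemma avg_sq_le (hn : 0 < n) (v : Fin n → EuclideanSpace ℝ (Fin d)) :
    ‖(n : ℝ)⁻¹ • ∑ i, v i‖ ^ 2 ≤ (n : ℝ)⁻¹ * ∑ i, ‖v i‖ ^ 2 := by
  have hnp : (0:ℝ) < n := by exact_mod_cast hn
  have h1 : ‖∑ i, v i‖ ≤ ∑ i, ‖v i‖ := norm_sum_le _ _
  have h2 : (∑ i, ‖v i‖) ^ 2 ≤ (n : ℝ) * ∑ i, ‖v i‖ ^ 2 := by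
    have := sq_sum_le_card_mul_sum_sq (s := (Finset.univ : Finset (Fin n)))
      (f := fun i => ‖v i‖)
    simpa using this
  have h3 : ‖∑ i, v i‖ ^ 2 ≤ (n : ℝ) * ∑ i, ‖v i‖ ^ 2 := by
    nlinarith [norm_nonneg (∑ i, v i)]
  rw [norm_smul, Real.norm_eq_abs, abs_of_nonneg (by positivity : (0:ℝ) ≤ (n:ℝ)⁻¹)]
  rw [mul_pow]
  calc (n:ℝ)⁻¹ ^ 2 * ‖∑ i, v i‖ ^ 2 ≤ (n:ℝ)⁻¹ ^ 2 * ((n:ℝ) * ∑ i, ‖v i‖ ^ 2) := by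
        apply mul_le_mul_of_nonneg_left h3 (by positivity)
    _ = (n:ℝ)⁻¹ * ∑ i, ‖v i‖ ^ 2 := by field_simp

lemma gradient_fglob_eq' (f : Fin n → EuclideanSpace ℝ (Fin d) → ℝ)
    (hdiff : ∀ i, Differentiable ℝ (f i)) (x : EuclideanSpace ℝ (Fin d)) :
    gradient (fglob f) x = (n : ℝ)⁻¹ • ∑ i, gradient (f i) x := by
  unfold fglob gradient
  have hda : DifferentiableAt ℝ (fun z => ∑ i, f i z) x :=
    DifferentiableAt.fun_sum fun i _ => (hdiff i).differentiableAt
  rw [fderiv_const_mul hda, fderiv_fun_sum (fun i _ => (hdiff i).differentiableAt),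
    _root_.map_smul, map_sum]

/-- **Bound on the averaged tracking direction (inequality (ybar-bound), pointwise
form)**. -/
theorem averaged_tracking_direction_bound
    (hn : 0 < n) (hd : 0 < d)
    (f : Fin n → EuclideanSpace ℝ (Fin d) → ℝ)
    (L : ℝ) (xstar : EuclideanSpace ℝ (Fin d))
    (hdiff : ∀ i, Differentiable ℝ (f i))
    (hLip : ∀ i a b, ‖gradient (f i) a - gradient (f i) b‖ ≤ L * ‖a - b‖)
    (hopt : gradient (fglob f) xstar = 0)
    (γ : ℝ) (hγ : 0 < γ)
    (xk es : Fin n → EuclideanSpace ℝ (Fin d)) (yb : EuclideanSpace ℝ (Fin d))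
    (hyb : yb = rowAvg (gmat f xk) + γ • rowAvg es) :
    ‖yb - gradient (fglob f) xstar‖ ^ 2 = ‖yb‖ ^ 2
    ∧ ‖yb‖ ^ 2 ≤ 4 * L ^ 2 / n * dev2 xk
        + 4 * L ^ 2 * ‖rowAvg xk - xstar‖ ^ 2 + 2 * γ ^ 2 / n * fro2 es := by
  have hnp : (0:ℝ) < n := by exact_mod_cast hn
  have hL : 0 ≤ L := by
    have i0 : Fin n := ⟨0, hn⟩
    have j0 : Fin d := ⟨0, hd⟩
    have h := hLip i0 0 (EuclideanSpace.single j0 (1:ℝ))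
    have hne : ‖(0 : EuclideanSpace ℝ (Fin d)) - EuclideanSpace.single j0 (1:ℝ)‖ = 1 := by
      simp [EuclideanSpace.norm_single]
    rw [hne, mul_one] at h
    exact le_trans (norm_nonneg _) h
  rw [hopt, sub_zero]
  refine ⟨rfl, ?_⟩
  have hstar : (n : ℝ)⁻¹ • ∑ i, gradient (f i) xstar = 0 := by
    rw [← gradient_fglob_eq' f hdiff xstar, hopt]
  set xb := rowAvg xk with hxb
  set u : EuclideanSpace ℝ (Fin d) :=
    (n : ℝ)⁻¹ • ∑ i, (gradient (f i) (xk i) - gradient (f i) xstar) with hu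
  set v : EuclideanSpace ℝ (Fin d) := γ • rowAvg es with hv
  have hyb2 : yb = u + v := by
    rw [hyb, hu, hv]
    congr 1
    rw [Finset.sum_sub_distrib, smul_sub, hstar, sub_zero]
    rfl
  have hsplit : ‖yb‖ ^ 2 ≤ 2 * ‖u‖ ^ 2 + 2 * ‖v‖ ^ 2 := by
    rw [hyb2]
    have h1 : ‖u + v‖ ≤ ‖u‖ + ‖v‖ := norm_add_le _ _
    nlinarith [sq_nonneg (‖u‖ - ‖v‖), norm_nonneg (u + v), norm_nonneg u, norm_nonneg v]
  -- bound on u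
  have hdel : ∀ i, ‖gradient (f i) (xk i) - gradient (f i) xstar‖ ^ 2
      ≤ 2 * L ^ 2 * ‖xk i - xb‖ ^ 2 + 2 * L ^ 2 * ‖xb - xstar‖ ^ 2 := by
    intro i
    have h1 : ‖gradient (f i) (xk i) - gradient (f i) xstar‖
        ≤ ‖gradient (f i) (xk i) - gradient (f i) xb‖
          + ‖gradient (f i) xb - gradient (f i) xstar‖ := by
      have := norm_sub_le_norm_sub_add_norm_sub (gradient (f i) (xk i))
        (gradient (f i) xb) (gradient (f i) xstar)
      exact this
    have h2 := hLip i (xk i) xb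
    have h3 := hLip i xb xstar
    nlinarith [norm_nonneg (gradient (f i) (xk i) - gradient (f i) xstar),
      norm_nonneg (xk i - xb), norm_nonneg (xb - xstar),
      sq_nonneg (L * ‖xk i - xb‖ - L * ‖xb - xstar‖),
      norm_nonneg (gradient (f i) (xk i) - gradient (f i) xb),
      norm_nonneg (gradient (f i) xb - gradient (f i) xstar)]
  have hub : ‖u‖ ^ 2 ≤ 2 * L ^ 2 / n * dev2 xk + 2 * L ^ 2 * ‖xb - xstar‖ ^ 2 := by
    have h1 := avg_sq_le hn (fun i => gradient (f i) (xk i) - gradient (f i) xstar)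
    have h2 : ∑ i, ‖gradient (f i) (xk i) - gradient (f i) xstar‖ ^ 2
        ≤ 2 * L ^ 2 * dev2 xk + (n : ℝ) * (2 * L ^ 2 * ‖xb - xstar‖ ^ 2) := by
      calc ∑ i, ‖gradient (f i) (xk i) - gradient (f i) xstar‖ ^ 2
          ≤ ∑ i, (2 * L ^ 2 * ‖xk i - xb‖ ^ 2 + 2 * L ^ 2 * ‖xb - xstar‖ ^ 2) :=
            Finset.sum_le_sum fun i _ => hdel i
        _ = 2 * L ^ 2 * dev2 xk + (n : ℝ) * (2 * L ^ 2 * ‖xb - xstar‖ ^ 2) := by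
            rw [Finset.sum_add_distrib, ← Finset.mul_sum, Finset.sum_const]
            simp [dev2, hxb, mul_comm]
    have h3 : ‖u‖ ^ 2 ≤ (n:ℝ)⁻¹ * (2 * L ^ 2 * dev2 xk
        + (n : ℝ) * (2 * L ^ 2 * ‖xb - xstar‖ ^ 2)) := by
      refine le_trans h1 ?_
      apply mul_le_mul_of_nonneg_left h2 (by positivity)
    calc ‖u‖ ^ 2 ≤ _ := h3
      _ = 2 * L ^ 2 / n * dev2 xk + 2 * L ^ 2 * ‖xb - xstar‖ ^ 2 := by
          field_simp
  have hvb : ‖v‖ ^ 2 ≤ γ ^ 2 / n * fro2 es := by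
    have h1 : ‖v‖ ^ 2 = γ ^ 2 * ‖rowAvg es‖ ^ 2 := by
      rw [hv, norm_smul, Real.norm_eq_abs, mul_pow, sq_abs]
    have h2 := avg_sq_le hn es
    rw [h1]
    calc γ ^ 2 * ‖rowAvg es‖ ^ 2 ≤ γ ^ 2 * ((n:ℝ)⁻¹ * ∑ i, ‖es i‖ ^ 2) := by
          apply mul_le_mul_of_nonneg_left _ (by positivity)
          simpa [rowAvg] using h2
      _ = γ ^ 2 / n * fro2 es := by rw [fro2]; ring
  calc ‖yb‖ ^ 2 ≤ 2 * ‖u‖ ^ 2 + 2 * ‖v‖ ^ 2 := hsplit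
    _ ≤ 2 * (2 * L ^ 2 / n * dev2 xk + 2 * L ^ 2 * ‖xb - xstar‖ ^ 2)
        + 2 * (γ ^ 2 / n * fro2 es) := by linarith
    _ = 4 * L ^ 2 / n * dev2 xk + 4 * L ^ 2 * ‖rowAvg xk - xstar‖ ^ 2
        + 2 * γ ^ 2 / n * fro2 es := by rw [hxb]; ring

end
end

section
/- Strong-convexity descent cross-term bound (inequality (int-p2), pointwise form): suppose f := (1/n)∑_{j=1}^n f_j is μ-strongly convex with minimizer x* (so ∇f(x*) = 0), each f_j is differentiable with L-Lipschitz gradient, and ȳ_k = (1/n)∑_{j=1}^n ∇f_j(x_{j,k}) + γ·ē^s_k. Then for any α_k > 0 and any ε₂ > 0, 2·⟨x̄_k − x*, −α_k·ȳ_k⟩ ≤ −μα_k·‖x̄_k − x*‖² + (α_k/ε₂)·‖x̄_k − x*‖² + (2α_kε₂L²/n)·‖x_k − 𝐱̄_k‖² + 2α_kε₂γ²·‖ē^s_k‖². -/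
open MeasureTheory Finset
open scoped RealInnerProductSpace

noncomputable section

variable {n d : ℕ}

lemma young (a b ε : ℝ) (hε : 0 < ε) : 2 * (a * b) ≤ ε⁻¹ * a^2 + ε * b^2 := by
  nlinarith [mul_nonneg (inv_nonneg.mpr hε.le) (sq_nonneg (a - ε * b)),
    mul_inv_cancel₀ hε.ne']

lemma sq_add_le (x a b : ℝ) (hx : 0 ≤ x) (hab : x ≤ a + b) :
    x^2 ≤ 2 * a^2 + 2 * b^2 := by
  nlinarith [sq_nonneg (a - b), sq_nonneg (a + b)]

lemma t1lem (I s μ α : ℝ) (hμ : 0 < μ) (hα : 0 < α) (h : μ * s ≤ I) (hs : 0 ≤ s) :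
    -(2*α) * I ≤ -(μ * α) * s := by
  nlinarith [mul_nonneg (mul_nonneg hμ.le hα.le) hs]

lemma t2lem (I a2 b2 X Y α ε : ℝ) (hα : 0 < α) (hε : 0 < ε)
    (hy : 2 * I ≤ ε⁻¹ * a2 + ε * b2) (hb : b2 ≤ 2 * X + 2 * Y) :
    α * (2 * I) ≤ α / ε * a2 + 2 * α * ε * X + 2 * α * ε * Y := by
  have h1 := mul_le_mul_of_nonneg_left hy hα.le
  have h2 := mul_le_mul_of_nonneg_left hb (mul_pos hα hε).le
  calc α * (2 * I) ≤ α * (ε⁻¹ * a2 + ε * b2) := h1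
    _ = α / ε * a2 + α * ε * b2 := by
        field_simp
    _ ≤ α / ε * a2 + α * ε * (2 * X + 2 * Y) := by linarith
    _ = α / ε * a2 + 2 * α * ε * X + 2 * α * ε * Y := by ring

lemma grad_fglob (f : Fin n → EuclideanSpace ℝ (Fin d) → ℝ)
    (hdiff : ∀ i, Differentiable ℝ (f i)) (z : EuclideanSpace ℝ (Fin d)) :
    gradient (fglob f) z = (n : ℝ)⁻¹ • ∑ i, gradient (f i) z := by
  have h : ∀ i, HasFDerivAt (f i)
      ((InnerProductSpace.toDual ℝ (EuclideanSpace ℝ (Fin d))) (gradient (f i) z)) z :=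
    fun i => ((hdiff i z).hasGradientAt).hasFDerivAt
  have hF : HasFDerivAt (fglob f)
      ((n:ℝ)⁻¹ • ∑ i, (InnerProductSpace.toDual ℝ (EuclideanSpace ℝ (Fin d)))
        (gradient (f i) z)) z := by
    have := (HasFDerivAt.fun_sum (u := Finset.univ) (fun i _ => h i)).const_mul ((n:ℝ)⁻¹)
    exact this
  have hG : HasGradientAt (fglob f) ((n:ℝ)⁻¹ • ∑ i, gradient (f i) z) z := by
    rw [hasGradientAt_iff_hasFDerivAt]
    refine hF.congr_fderiv ?_
    simp only [_root_.map_smul, map_sum]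
  exact hG.gradient

/-- **Strong-convexity descent cross-term bound (inequality (int-p2), pointwise
form)**. -/
theorem strong_convexity_cross_term_bound
    (hn : 0 < n) (hd : 0 < d)
    (f : Fin n → EuclideanSpace ℝ (Fin d) → ℝ)
    (L μs : ℝ) (xstar : EuclideanSpace ℝ (Fin d))
    (hdiff : ∀ i, Differentiable ℝ (f i))
    (hLip : ∀ i a b, ‖gradient (f i) a - gradient (f i) b‖ ≤ L * ‖a - b‖)
    (hμ : 0 < μs)
    (hsc : ∀ a b, fglob f b ≥
      fglob f a + ⟪gradient (fglob f) a, b - a⟫ + μs / 2 * ‖a - b‖ ^ 2)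
    (hopt : gradient (fglob f) xstar = 0)
    (γ : ℝ) (hγ : 0 < γ)
    (xk es : Fin n → EuclideanSpace ℝ (Fin d)) (yb : EuclideanSpace ℝ (Fin d))
    (hyb : yb = rowAvg (gmat f xk) + γ • rowAvg es) :
    ∀ αk ε₂ : ℝ, 0 < αk → 0 < ε₂ →
      2 * ⟪rowAvg xk - xstar, -(αk • yb)⟫
        ≤ -(μs * αk) * ‖rowAvg xk - xstar‖ ^ 2
          + αk / ε₂ * ‖rowAvg xk - xstar‖ ^ 2
          + 2 * αk * ε₂ * L ^ 2 / n * dev2 xk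
          + 2 * αk * ε₂ * γ ^ 2 * ‖rowAvg es‖ ^ 2 := by
  intro αk ε₂ hαk hε₂
  have hn0 : (0:ℝ) < (n:ℝ) := by exact_mod_cast hn
  set xb := rowAvg xk with hxb
  set eb := rowAvg es with heb
  set e := xb - xstar with he
  set g := gradient (fglob f) xb with hg
  -- L ≥ 0
  have hL0 : 0 ≤ L := by
    have h1 := hLip ⟨0, hn⟩ (EuclideanSpace.single ⟨0, hd⟩ (1:ℝ)) 0
    have h2 : ‖EuclideanSpace.single (⟨0, hd⟩ : Fin d) (1:ℝ) - 0‖ = 1 := by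
      simp [EuclideanSpace.norm_single]
    rw [h2, mul_one] at h1
    exact le_trans (norm_nonneg _) h1
  -- strong convexity inner bound
  have hinner : μs * ‖e‖^2 ≤ ⟪g, e⟫ := by
    have hsc1 := hsc xb xstar
    have hsc2 := hsc xstar xb
    rw [hopt] at hsc2
    simp only [inner_zero_left] at hsc2
    have hnorm : ‖xstar - xb‖ = ‖xb - xstar‖ := norm_sub_rev _ _
    have h1 : ⟪g, xstar - xb⟫ = -⟪g, e⟫ := by
      rw [he, ← inner_neg_right]
      congr 1
      abel
    rw [h1] at hsc1
    rw [hnorm] at hsc2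
    rw [he]
    linarith
  -- gradient average decomposition
  have hgrad : rowAvg (gmat f xk) - g
      = (n:ℝ)⁻¹ • ∑ i, (gradient (f i) (xk i) - gradient (f i) xb) := by
    simp only [hg, grad_fglob f hdiff, rowAvg, gmat, ← smul_sub, ← Finset.sum_sub_distrib]
  have hdiffnorm : ‖rowAvg (gmat f xk) - g‖^2 ≤ L^2 / n * dev2 xk := by
    have h1 : ‖rowAvg (gmat f xk) - g‖ ≤ (n:ℝ)⁻¹ * ∑ i, L * ‖xk i - xb‖ := by
      rw [hgrad, norm_smul]
      have : ‖(n:ℝ)⁻¹‖ = (n:ℝ)⁻¹ := by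
        simp
      rw [this]
      gcongr
      exact le_trans (norm_sum_le _ _) (Finset.sum_le_sum (fun i _ => hLip i (xk i) xb))
    have h2 : (∑ i, L * ‖xk i - xb‖)^2 ≤ (n:ℝ) * ∑ i, (L * ‖xk i - xb‖)^2 := by
      have := sq_sum_le_card_mul_sum_sq (s := Finset.univ)
        (f := fun i : Fin n => L * ‖xk i - xb‖)
      simpa using this
    have h3 : ∑ i, (L * ‖xk i - xb‖)^2 = L^2 * dev2 xk := by
      rw [dev2, Finset.mul_sum]
      refine Finset.sum_congr rfl (fun i _ => ?_)
      rw [← hxb]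
      ring
    have h4 : (0:ℝ) ≤ ∑ i, L * ‖xk i - xb‖ :=
      Finset.sum_nonneg (fun i _ => mul_nonneg hL0 (norm_nonneg _))
    have h5 : ‖rowAvg (gmat f xk) - g‖^2 ≤ ((n:ℝ)⁻¹ * ∑ i, L * ‖xk i - xb‖)^2 :=
      pow_le_pow_left₀ (norm_nonneg _) h1 2
    have h6 : ((n:ℝ)⁻¹ * ∑ i, L * ‖xk i - xb‖)^2
        = (n:ℝ)⁻¹^2 * (∑ i, L * ‖xk i - xb‖)^2 := by ring
    have h7 : (n:ℝ)⁻¹^2 * (∑ i, L * ‖xk i - xb‖)^2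
        ≤ (n:ℝ)⁻¹^2 * ((n:ℝ) * (L^2 * dev2 xk)) := by
      rw [← h3]
      exact mul_le_mul_of_nonneg_left h2 (by positivity)
    have h8 : (n:ℝ)⁻¹^2 * ((n:ℝ) * (L^2 * dev2 xk)) = L^2 / n * dev2 xk := by
      field_simp
    linarith
  -- residual decomposition and bound
  have hr : yb - g = (rowAvg (gmat f xk) - g) + γ • eb := by
    rw [hyb]; abel
  have hrsq : ‖yb - g‖^2 ≤ 2 * (L^2/(n:ℝ) * dev2 xk) + 2 * (γ^2 * ‖eb‖^2) := by
    have hle : ‖yb - g‖ ≤ ‖rowAvg (gmat f xk) - g‖ + ‖γ • eb‖ := by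
      rw [hr]; exact norm_add_le _ _
    have hsm : ‖γ • eb‖ = γ * ‖eb‖ := by
      rw [norm_smul, Real.norm_eq_abs, abs_of_pos hγ]
    rw [hsm] at hle
    have := sq_add_le ‖yb - g‖ ‖rowAvg (gmat f xk) - g‖ (γ * ‖eb‖) (norm_nonneg _) hle
    nlinarith [hdiffnorm]
  -- Young inequality
  have hyoung : 2 * ⟪e, -(yb - g)⟫ ≤ ε₂⁻¹ * ‖e‖^2 + ε₂ * ‖yb - g‖^2 := by
    have h1 : ⟪e, -(yb - g)⟫ ≤ ‖e‖ * ‖yb - g‖ := by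
      refine le_trans (real_inner_le_norm _ _) ?_
      rw [norm_neg]
    calc 2 * ⟪e, -(yb - g)⟫ ≤ 2 * (‖e‖ * ‖yb - g‖) := by linarith
      _ ≤ ε₂⁻¹ * ‖e‖^2 + ε₂ * ‖yb - g‖^2 :=
        young ‖e‖ ‖yb - g‖ ε₂ hε₂
  -- expansion
  have expand : 2 * ⟪e, -(αk • yb)⟫
      = -(2*αk) * ⟪e, g⟫ + αk * (2 * ⟪e, -(yb - g)⟫) := by
    simp only [inner_neg_right, real_inner_smul_right, inner_sub_right]
    ring
  have hcomm : ⟪e, g⟫ = ⟪g, e⟫ := real_inner_comm _ _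
  have t1 : -(2*αk) * ⟪e, g⟫ ≤ -(μs * αk) * ‖e‖^2 := by
    rw [hcomm]
    exact t1lem ⟪g, e⟫ (‖e‖^2) μs αk hμ hαk hinner (sq_nonneg _)
  have t2 : αk * (2 * ⟪e, -(yb - g)⟫)
      ≤ αk / ε₂ * ‖e‖^2 + 2 * αk * ε₂ * L^2 / n * dev2 xk
        + 2 * αk * ε₂ * γ^2 * ‖eb‖^2 := by
    have := t2lem ⟪e, -(yb - g)⟫ (‖e‖^2) (‖yb - g‖^2) (L^2/(n:ℝ) * dev2 xk)
      (γ^2 * ‖eb‖^2) αk ε₂ hαk hε₂ hyoung hrsq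
    calc αk * (2 * ⟪e, -(yb - g)⟫)
        ≤ αk / ε₂ * ‖e‖^2 + 2 * αk * ε₂ * (L^2/(n:ℝ) * dev2 xk)
          + 2 * αk * ε₂ * (γ^2 * ‖eb‖^2) := this
      _ = αk / ε₂ * ‖e‖^2 + 2 * αk * ε₂ * L^2 / n * dev2 xk
          + 2 * αk * ε₂ * γ^2 * ‖eb‖^2 := by ring
  rw [expand]
  linarith

end
end

section
/- Hybrid variance-reduction error recursion bound (inequality (eq-bound)): suppose q_{k+1} = (1−λ_k)·(q_k − g̃_k) + g̃'_{k+1} with λ_k ∈ (0,1], and let e^q_k := q_k − g_k. Let 𝒢 be a sub-σ-algebra such that q_k, g_k and g_{k+1} are 𝒢-measurable, E[g̃_k | 𝒢] = g_k, and E[g̃'_{k+1} | 𝒢] = g_{k+1}; assume moreover that each of the n rows of g̃'_{k+1} − g_{k+1} has second moment bounded by σ_ξ², so that E‖g̃'_{k+1} − g_{k+1}‖² ≤ n·σ_ξ². Then E‖e^q_{k+1}‖² ≤ (1−λ_k)²·E‖e^q_k‖² + 3(1−λ_k)²·E‖g̃'_{k+1} − g̃_k‖² + 3(1−λ_k)²·E‖g_{k+1}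 − g_k‖² + 3λ_k²·n·σ_ξ². -/
open MeasureTheory Finset
open scoped RealInnerProductSpace

noncomputable section

variable {n d : ℕ}

section Helpers

variable {Ω : Type*} {m0 : MeasurableSpace Ω} {μ : MeasureTheory.Measure Ω}

lemma memLp2_integrable_inner {E : Type*} [NormedAddCommGroup E] [InnerProductSpace ℝ E]
    {f g : Ω → E} (hf : MemLp f 2 μ) (hg : MemLp g 2 μ) :
    Integrable (fun ω => ⟪f ω, g ω⟫) μ := by
  have h := MeasureTheory.L2.integrable_inner (𝕜 := ℝ) (hf.toLp f) (hg.toLp g)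
  refine h.congr ?_
  filter_upwards [hf.coeFn_toLp, hg.coeFn_toLp] with ω h1 h2
  rw [h1, h2]

lemma memLp2_integrable_norm_sq {E : Type*} [NormedAddCommGroup E] [InnerProductSpace ℝ E]
    {f : Ω → E} (hf : MemLp f 2 μ) :
    Integrable (fun ω => ‖f ω‖ ^ 2) μ := by
  refine (memLp2_integrable_inner hf hf).congr (Filter.Eventually.of_forall fun ω => ?_)
  simp [real_inner_self_eq_norm_sq]

lemma memLp2_integrable_mul {f g : Ω → ℝ} (hf : MemLp f 2 μ) (hg : MemLp g 2 μ) :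
    Integrable (fun ω => f ω * g ω) μ := by
  have h := memLp2_integrable_inner hf hg
  simpa [RCLike.inner_apply, mul_comm] using h

lemma memLp2_coord {f : Ω → EuclideanSpace ℝ (Fin d)} (hf : MemLp f 2 μ) (j : Fin d) :
    MemLp (fun ω => f ω j) 2 μ :=
  (EuclideanSpace.proj (𝕜 := ℝ) j).comp_memLp' hf

lemma integrableOn_of_integrable {E : Type*} [NormedAddCommGroup E]
    {f : Ω → E} (h : Integrable f μ) (s : Set Ω) : IntegrableOn f s μ :=
  h.integrableOn

lemma setIntegral_congr_of_ae {E : Type*} [NormedAddCommGroup E] [NormedSpace ℝ E]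
    {f g : Ω → E} (h : f =ᵐ[μ] g) (s : Set Ω) :
    ∫ x in s, f x ∂μ = ∫ x in s, g x ∂μ :=
  integral_congr_ae (ae_restrict_of_ae h)

lemma integrable_coord {f : Ω → EuclideanSpace ℝ (Fin d)} (hf : Integrable f μ)
    (j : Fin d) : Integrable (fun ω => f ω j) μ :=
  (EuclideanSpace.proj (𝕜 := ℝ) j).integrable_comp hf

lemma integral_coord {f : Ω → EuclideanSpace ℝ (Fin d)} (hf : Integrable f μ)
    (j : Fin d) : ∫ ω, f ω j ∂μ = (∫ ω, f ω ∂μ) j :=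
  (EuclideanSpace.proj (𝕜 := ℝ) j).integral_comp_comm hf

/-- Conditional expectation commutes with coordinate projections. -/
lemma condexp_coord {𝒢 : MeasurableSpace Ω} (h𝒢 : 𝒢 ≤ m0) [IsProbabilityMeasure μ]
    {Y Z : Ω → EuclideanSpace ℝ (Fin d)}
    (hY : Integrable Y μ) (hZ : Integrable Z μ) (hZm : Measurable[𝒢] Z)
    (hcond : μ[Y|𝒢] =ᵐ[μ] Z) (j : Fin d) :
    μ[fun ω => Y ω j | 𝒢] =ᵐ[μ] fun ω => Z ω j := by
  have hYj : Integrable (fun ω => Y ω j) μ := integrable_coord hY j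
  have hZj : Integrable (fun ω => Z ω j) μ := integrable_coord hZ j
  refine (ae_eq_condExp_of_forall_setIntegral_eq h𝒢 hYj
    (fun s _ _ => integrableOn_of_integrable hZj s) (fun s hs hμs => ?_) ?_).symm
  · have h1 : ∫ x in s, Z x j ∂μ = (∫ x in s, Z x ∂μ) j :=
      integral_coord (integrableOn_of_integrable hZ s) j
    have h2 : ∫ x in s, Y x j ∂μ = (∫ x in s, Y x ∂μ) j :=
      integral_coord (integrableOn_of_integrable hY s) j
    have h3 : ∫ x in s, Z x ∂μ = ∫ x in s, Y x ∂μ := by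
      rw [← setIntegral_condExp h𝒢 hY hs]
      exact setIntegral_congr_of_ae hcond.symm s
    rw [h1, h2, h3]
  · exact StronglyMeasurable.aestronglyMeasurable
      ((EuclideanSpace.proj (𝕜 := ℝ) j).continuous.measurable.comp hZm).stronglyMeasurable

/-- Pull-out orthogonality: if `X` is `𝒢`-measurable and `μ[Y|𝒢] = Z` a.e., then
`∫ X·Y = ∫ X·Z`. -/
lemma integral_mul_eq_of_condexp {𝒢 : MeasurableSpace Ω} (h𝒢 : 𝒢 ≤ m0) [IsProbabilityMeasure μ]
    {X Y Z : Ω → ℝ} (hXm : StronglyMeasurable[𝒢] X)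
    (hX : MemLp X 2 μ) (hY : MemLp Y 2 μ) (hZ : MemLp Z 2 μ)
    (hcond : μ[Y|𝒢] =ᵐ[μ] Z) :
    ∫ ω, X ω * Y ω ∂μ = ∫ ω, X ω * Z ω ∂μ := by
  have hXY : Integrable (fun ω => X ω * Y ω) μ := memLp2_integrable_mul hX hY
  have h1 : μ[(fun ω => X ω * Y ω)|𝒢] =ᵐ[μ] fun ω => X ω * (μ[Y|𝒢]) ω := by
    have h := condExp_mul_of_stronglyMeasurable_left hXm (μ := μ) (f := X) (g := Y)
      hXY (hY.integrable one_le_two)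
    exact h
  calc ∫ ω, X ω * Y ω ∂μ = ∫ ω, (μ[(fun ω => X ω * Y ω)|𝒢]) ω ∂μ :=
        (integral_condExp h𝒢).symm
    _ = ∫ ω, X ω * Z ω ∂μ := by
        refine integral_congr_ae ?_
        filter_upwards [h1, hcond] with ω hω1 hω2
        rw [hω1, hω2]

lemma norm_add3_sq_le {E : Type*} [NormedAddCommGroup E] (x y z : E) :
    ‖x + y + z‖ ^ 2 ≤ 3 * ‖x‖ ^ 2 + 3 * ‖y‖ ^ 2 + 3 * ‖z‖ ^ 2 := by
  have h := norm_add₃_le (a := x) (b := y) (c := z)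
  have h2 : ‖x + y + z‖ ^ 2 ≤ (‖x‖ + ‖y‖ + ‖z‖) ^ 2 :=
    pow_le_pow_left₀ (norm_nonneg _) h 2
  nlinarith [sq_nonneg (‖x‖ - ‖y‖), sq_nonneg (‖y‖ - ‖z‖), sq_nonneg (‖x‖ - ‖z‖)]

end Helpers


/-- **Hybrid variance-reduction error recursion bound (inequality (eq-bound))**. -/
theorem hybrid_vr_error_recursion_bound
    {Ω : Type*} {m0 : MeasurableSpace Ω} (μ : Measure Ω) [IsProbabilityMeasure μ]
    (hn : 0 < n) (hd : 0 < d)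
    (lamk σξ : ℝ) (hlamk : lamk ∈ Set.Ioc (0 : ℝ) 1)
    (q q' g g' gt gt' : Ω → Fin n → EuclideanSpace ℝ (Fin d))
    (𝒢 : MeasurableSpace Ω) (h𝒢 : 𝒢 ≤ m0)
    -- square integrability of all the random matrices involved
    (hLq : ∀ i, MemLp (fun ω => q ω i) 2 μ)
    (hLg : ∀ i, MemLp (fun ω => g ω i) 2 μ)
    (hLg' : ∀ i, MemLp (fun ω => g' ω i) 2 μ)
    (hLgt : ∀ i, MemLp (fun ω => gt ω i) 2 μ)
    (hLgt' : ∀ i, MemLp (fun ω => gt' ω i) 2 μ)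
    -- q, g and g' are 𝒢-measurable and the stochastic gradients are conditionally
    -- unbiased given 𝒢
    (hmq : Measurable[𝒢] q) (hmg : Measurable[𝒢] g) (hmg' : Measurable[𝒢] g')
    (hunb : ∀ i, μ[fun ω => gt ω i | 𝒢] =ᵐ[μ] fun ω => g ω i)
    (hunb' : ∀ i, μ[fun ω => gt' ω i | 𝒢] =ᵐ[μ] fun ω => g' ω i)
    -- each row of g̃' − g' has second moment at most σξ²
    (hvar' : ∀ i, ∫ ω, ‖gt' ω i - g' ω i‖ ^ 2 ∂μ ≤ σξ ^ 2)
    -- the hybrid variance-reduction update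
    (hqrec : ∀ ω i, q' ω i = (1 - lamk) • (q ω i - gt ω i) + gt' ω i) :
    ∫ ω, fro2 (fun i => q' ω i - g' ω i) ∂μ
      ≤ (1 - lamk) ^ 2 * ∫ ω, fro2 (fun i => q ω i - g ω i) ∂μ
        + 3 * (1 - lamk) ^ 2 * ∫ ω, fro2 (fun i => gt' ω i - gt ω i) ∂μ
        + 3 * (1 - lamk) ^ 2 * ∫ ω, fro2 (fun i => g' ω i - g ω i) ∂μ
        + 3 * lamk ^ 2 * n * σξ ^ 2 := by
  obtain ⟨hl0, hl1⟩ := hlamk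
  simp only [fro2]
  set A : Ω → Fin n → EuclideanSpace ℝ (Fin d) :=
    fun ω i => (1 - lamk) • (q ω i - g ω i) with hA
  set B : Ω → Fin n → EuclideanSpace ℝ (Fin d) :=
    fun ω i => (1 - lamk) • (g ω i - gt ω i) + (gt' ω i - g' ω i) with hB
  have hdecomp : ∀ ω i, q' ω i - g' ω i = A ω i + B ω i := by
    intro ω i
    rw [hqrec ω i]
    simp only [hA, hB]
    module
  have hLA : ∀ i, MemLp (fun ω => A ω i) 2 μ := fun i =>
    ((hLq i).sub (hLg i)).const_smul (1 - lamk)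
  have hLB : ∀ i, MemLp (fun ω => B ω i) 2 μ := fun i =>
    (((hLg i).sub (hLgt i)).const_smul (1 - lamk)).add ((hLgt' i).sub (hLg' i))
  have IA : ∀ i, Integrable (fun ω => ‖A ω i‖ ^ 2) μ := fun i =>
    memLp2_integrable_norm_sq (hLA i)
  have IB : ∀ i, Integrable (fun ω => ‖B ω i‖ ^ 2) μ := fun i =>
    memLp2_integrable_norm_sq (hLB i)
  have IAB : ∀ i, Integrable (fun ω => ⟪A ω i, B ω i⟫) μ := fun i =>
    memLp2_integrable_inner (hLA i) (hLB i)
  have Iqg : ∀ i, Integrable (fun ω => ‖q ω i - g ω i‖ ^ 2) μ := fun i =>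
    memLp2_integrable_norm_sq ((hLq i).sub (hLg i))
  have Igtgt : ∀ i, Integrable (fun ω => ‖gt' ω i - gt ω i‖ ^ 2) μ := fun i =>
    memLp2_integrable_norm_sq ((hLgt' i).sub (hLgt i))
  have Igg : ∀ i, Integrable (fun ω => ‖g' ω i - g ω i‖ ^ 2) μ := fun i =>
    memLp2_integrable_norm_sq ((hLg' i).sub (hLg i))
  have Igtg : ∀ i, Integrable (fun ω => ‖gt' ω i - g' ω i‖ ^ 2) μ := fun i =>
    memLp2_integrable_norm_sq ((hLgt' i).sub (hLg' i))
  have hmeasA : ∀ i j, StronglyMeasurable[𝒢] (fun ω => A ω i j) := by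
    intro i j
    have h1 : Measurable[𝒢] (fun ω => q ω i j) :=
      (EuclideanSpace.proj (𝕜 := ℝ) j).continuous.measurable.comp ((measurable_pi_apply i).comp hmq)
    have h2 : Measurable[𝒢] (fun ω => g ω i j) :=
      (EuclideanSpace.proj (𝕜 := ℝ) j).continuous.measurable.comp ((measurable_pi_apply i).comp hmg)
    have h3 : Measurable[𝒢] (fun ω => (1 - lamk) * (q ω i j - g ω i j)) :=
      measurable_const.mul (h1.sub h2)
    have h4 : (fun ω => A ω i j) = fun ω => (1 - lamk) * (q ω i j - g ω i j) := by
      funext ω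
      simp [hA, PiLp.smul_apply, PiLp.sub_apply, smul_eq_mul]
    rw [h4]
    exact h3.stronglyMeasurable
  have hsub : ∀ (Y Z : Ω → Fin n → EuclideanSpace ℝ (Fin d)),
      (∀ i, MemLp (fun ω => Y ω i) 2 μ) → (∀ i, MemLp (fun ω => Z ω i) 2 μ) →
      Measurable[𝒢] Z →
      (∀ i, μ[fun ω => Y ω i | 𝒢] =ᵐ[μ] fun ω => Z ω i) →
      ∀ i j, ∫ ω, A ω i j * Y ω i j ∂μ = ∫ ω, A ω i j * Z ω i j ∂μ := by
    intro Y Z hLY hLZ hmZ hcond i j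
    refine integral_mul_eq_of_condexp h𝒢 (hmeasA i j) (memLp2_coord (hLA i) j)
      (memLp2_coord (hLY i) j) (memLp2_coord (hLZ i) j) ?_
    exact condexp_coord h𝒢 ((hLY i).integrable one_le_two) ((hLZ i).integrable one_le_two)
      ((measurable_pi_apply i).comp hmZ) (hcond i) j
  have hcross : ∀ i, ∫ ω, ⟪A ω i, B ω i⟫ ∂μ = 0 := by
    intro i
    have hintp : ∀ (j : Fin d) (Y : Ω → Fin n → EuclideanSpace ℝ (Fin d)),
        (∀ i', MemLp (fun ω => Y ω i') 2 μ) →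
        Integrable (fun ω => A ω i j * Y ω i j) μ := fun j Y hLY =>
      memLp2_integrable_mul (memLp2_coord (hLA i) j) (memLp2_coord (hLY i) j)
    have hintB : ∀ j : Fin d, Integrable (fun ω => A ω i j * B ω i j) μ := fun j =>
      memLp2_integrable_mul (memLp2_coord (hLA i) j) (memLp2_coord (hLB i) j)
    have hrw : (fun ω => ⟪A ω i, B ω i⟫) = fun ω => ∑ j, A ω i j * B ω i j := by
      funext ω
      simp [PiLp.inner_apply, RCLike.inner_apply, mul_comm]
    rw [hrw, integral_finset_sum _ (fun j _ => hintB j)]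
    refine Finset.sum_eq_zero fun j _ => ?_
    have hBsplit : (fun ω => A ω i j * B ω i j) = fun ω =>
        ((1 - lamk) * (A ω i j * g ω i j) - (1 - lamk) * (A ω i j * gt ω i j))
          + (A ω i j * gt' ω i j - A ω i j * g' ω i j) := by
      funext ω
      have hb : B ω i j = (1 - lamk) * (g ω i j - gt ω i j) + (gt' ω i j - g' ω i j) := by
        simp [hB, PiLp.add_apply, PiLp.sub_apply, PiLp.smul_apply, smul_eq_mul]
      rw [hb]
      ring
    have hI1 : Integrable (fun ω => (1 - lamk) * (A ω i j * g ω i j)) μ := by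
      exact (hintp j g hLg).const_mul (1 - lamk)
    have hI2 : Integrable (fun ω => (1 - lamk) * (A ω i j * gt ω i j)) μ := by
      exact (hintp j gt hLgt).const_mul (1 - lamk)
    have hI3 : Integrable (fun ω => A ω i j * gt' ω i j) μ := hintp j gt' hLgt'
    have hI4 : Integrable (fun ω => A ω i j * g' ω i j) μ := hintp j g' hLg'
    have hI12 : Integrable (fun ω => (1 - lamk) * (A ω i j * g ω i j)
        - (1 - lamk) * (A ω i j * gt ω i j)) μ := by exact hI1.sub hI2
    have hI34 : Integrable (fun ω => A ω i j * gt' ω i j - A ω i j * g' ω i j) μ := by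
      exact hI3.sub hI4
    rw [hBsplit, integral_add hI12 hI34, integral_sub hI1 hI2, integral_sub hI3 hI4,
      integral_const_mul, integral_const_mul,
      hsub gt g hLgt hLg hmg hunb i j, hsub gt' g' hLgt' hLg' hmg' hunb' i j]
    ring
  have hexp : ∫ ω, (∑ i, ‖q' ω i - g' ω i‖ ^ 2) ∂μ
      = (∑ i, ∫ ω, ‖A ω i‖ ^ 2 ∂μ) + ∑ i, ∫ ω, ‖B ω i‖ ^ 2 ∂μ := by
    have h1 : (fun ω => ∑ i, ‖q' ω i - g' ω i‖ ^ 2)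
        = fun ω => ∑ i, (‖A ω i‖ ^ 2 + 2 * ⟪A ω i, B ω i⟫ + ‖B ω i‖ ^ 2) := by
      funext ω
      refine Finset.sum_congr rfl fun i _ => ?_
      rw [hdecomp ω i, norm_add_sq_real]
    have hIsum : ∀ i : Fin n, Integrable
        (fun ω => ‖A ω i‖ ^ 2 + 2 * ⟪A ω i, B ω i⟫ + ‖B ω i‖ ^ 2) μ := fun i => by
      exact ((IA i).add ((IAB i).const_mul 2)).add (IB i)
    rw [h1, integral_finset_sum _ (fun i _ => hIsum i)]
    have h2 : ∀ i : Fin n, ∫ ω, (‖A ω i‖ ^ 2 + 2 * ⟪A ω i, B ω i⟫ + ‖B ω i‖ ^ 2) ∂μ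
        = ∫ ω, ‖A ω i‖ ^ 2 ∂μ + ∫ ω, ‖B ω i‖ ^ 2 ∂μ := by
      intro i
      have hI5 : Integrable (fun ω => ‖A ω i‖ ^ 2 + 2 * ⟪A ω i, B ω i⟫) μ := by
        exact (IA i).add ((IAB i).const_mul 2)
      have hI6 : Integrable (fun ω => 2 * ⟪A ω i, B ω i⟫) μ := by
        exact (IAB i).const_mul 2
      rw [integral_add hI5 (IB i), integral_add (IA i) hI6, integral_const_mul, hcross i]
      ring
    rw [Finset.sum_congr rfl fun i _ => h2 i, Finset.sum_add_distrib]
  have hfroqg : ∫ ω, (∑ i, ‖q ω i - g ω i‖ ^ 2) ∂μ = ∑ i, ∫ ω, ‖q ω i - g ω i‖ ^ 2 ∂μ :=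
    integral_finset_sum _ (fun i _ => Iqg i)
  have hfrogtgt : ∫ ω, (∑ i, ‖gt' ω i - gt ω i‖ ^ 2) ∂μ
      = ∑ i, ∫ ω, ‖gt' ω i - gt ω i‖ ^ 2 ∂μ :=
    integral_finset_sum _ (fun i _ => Igtgt i)
  have hfrogg : ∫ ω, (∑ i, ‖g' ω i - g ω i‖ ^ 2) ∂μ = ∑ i, ∫ ω, ‖g' ω i - g ω i‖ ^ 2 ∂μ :=
    integral_finset_sum _ (fun i _ => Igg i)
  have hSA : (∑ i, ∫ ω, ‖A ω i‖ ^ 2 ∂μ)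
      = (1 - lamk) ^ 2 * ∫ ω, (∑ i, ‖q ω i - g ω i‖ ^ 2) ∂μ := by
    rw [hfroqg, Finset.mul_sum]
    refine Finset.sum_congr rfl fun i _ => ?_
    have h1 : (fun ω => ‖A ω i‖ ^ 2) = fun ω => (1 - lamk) ^ 2 * ‖q ω i - g ω i‖ ^ 2 := by
      funext ω
      simp [hA, norm_smul, mul_pow, sq_abs, Real.norm_eq_abs]
    rw [h1, integral_const_mul]
  have hSB : ∀ i : Fin n, ∫ ω, ‖B ω i‖ ^ 2 ∂μ
      ≤ 3 * (1 - lamk) ^ 2 * ∫ ω, ‖gt' ω i - gt ω i‖ ^ 2 ∂μ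
        + 3 * (1 - lamk) ^ 2 * ∫ ω, ‖g' ω i - g ω i‖ ^ 2 ∂μ
        + 3 * lamk ^ 2 * σξ ^ 2 := by
    intro i
    have hptw : ∀ ω, ‖B ω i‖ ^ 2
        ≤ 3 * (1 - lamk) ^ 2 * ‖gt' ω i - gt ω i‖ ^ 2
          + 3 * (1 - lamk) ^ 2 * ‖g' ω i - g ω i‖ ^ 2
          + 3 * lamk ^ 2 * ‖gt' ω i - g' ω i‖ ^ 2 := by
      intro ω
      have hid : B ω i = (1 - lamk) • (gt' ω i - gt ω i)
          + (-(1 - lamk)) • (g' ω i - g ω i) + lamk • (gt' ω i - g' ω i) := by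
        simp only [hB]
        module
      rw [hid]
      refine (norm_add3_sq_le _ _ _).trans_eq ?_
      simp [norm_smul, mul_pow, sq_abs, Real.norm_eq_abs]
      ring
    have hmono : ∫ ω, ‖B ω i‖ ^ 2 ∂μ
        ≤ ∫ ω, (3 * (1 - lamk) ^ 2 * ‖gt' ω i - gt ω i‖ ^ 2
          + 3 * (1 - lamk) ^ 2 * ‖g' ω i - g ω i‖ ^ 2
          + 3 * lamk ^ 2 * ‖gt' ω i - g' ω i‖ ^ 2) ∂μ :=
      integral_mono (IB i) (by
        exact (((Igtgt i).const_mul _).add ((Igg i).const_mul _)).add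
          ((Igtg i).const_mul _)) hptw
    have hJ1 : Integrable (fun ω => 3 * (1 - lamk) ^ 2 * ‖gt' ω i - gt ω i‖ ^ 2) μ := by
      exact (Igtgt i).const_mul _
    have hJ2 : Integrable (fun ω => 3 * (1 - lamk) ^ 2 * ‖g' ω i - g ω i‖ ^ 2) μ := by
      exact (Igg i).const_mul _
    have hJ3 : Integrable (fun ω => 3 * lamk ^ 2 * ‖gt' ω i - g' ω i‖ ^ 2) μ := by
      exact (Igtg i).const_mul _
    have hJ12 : Integrable (fun ω => 3 * (1 - lamk) ^ 2 * ‖gt' ω i - gt ω i‖ ^ 2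
        + 3 * (1 - lamk) ^ 2 * ‖g' ω i - g ω i‖ ^ 2) μ := by exact hJ1.add hJ2
    rw [integral_add hJ12 hJ3, integral_add hJ1 hJ2,
      integral_const_mul, integral_const_mul, integral_const_mul] at hmono
    have h3 : 3 * lamk ^ 2 * ∫ ω, ‖gt' ω i - g' ω i‖ ^ 2 ∂μ ≤ 3 * lamk ^ 2 * σξ ^ 2 :=
      mul_le_mul_of_nonneg_left (hvar' i) (by positivity)
    linarith
  have hsumB : (∑ i, ∫ ω, ‖B ω i‖ ^ 2 ∂μ)
      ≤ 3 * (1 - lamk) ^ 2 * ∫ ω, (∑ i, ‖gt' ω i - gt ω i‖ ^ 2) ∂μ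
        + 3 * (1 - lamk) ^ 2 * ∫ ω, (∑ i, ‖g' ω i - g ω i‖ ^ 2) ∂μ
        + 3 * lamk ^ 2 * n * σξ ^ 2 := by
    calc (∑ i, ∫ ω, ‖B ω i‖ ^ 2 ∂μ)
        ≤ ∑ i : Fin n, (3 * (1 - lamk) ^ 2 * ∫ ω, ‖gt' ω i - gt ω i‖ ^ 2 ∂μ
            + 3 * (1 - lamk) ^ 2 * ∫ ω, ‖g' ω i - g ω i‖ ^ 2 ∂μ
            + 3 * lamk ^ 2 * σξ ^ 2) := Finset.sum_le_sum fun i _ => hSB i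
      _ = 3 * (1 - lamk) ^ 2 * ∫ ω, (∑ i, ‖gt' ω i - gt ω i‖ ^ 2) ∂μ
            + 3 * (1 - lamk) ^ 2 * ∫ ω, (∑ i, ‖g' ω i - g ω i‖ ^ 2) ∂μ
            + 3 * lamk ^ 2 * n * σξ ^ 2 := by
          rw [Finset.sum_add_distrib, Finset.sum_add_distrib, Finset.sum_const,
            card_univ, Fintype.card_fin, ← Finset.mul_sum, ← Finset.mul_sum,
            hfrogtgt, hfrogg, nsmul_eq_mul]
          ring
  rw [hexp, hSA]
  linarith


end
end
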